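/- Let ℓ ∈ ℕ and let q̄(w) = Σ_{k=0}^{ℓ} binom(−1/2, k)·(−2)^k·w^{ℓ−k}. Then for every α ∈ ℂ, the two-variable polynomial α^{2ℓ+1}·(w − 2)·q̄(w)² evaluated at w = z/α, i.e. the polynomial B_α(z) = (z − 2α)·(α^ℓ·q̄(z/α))² (which is a polynomial in z with coefficients polynomial in α), satisfies: B_α(z) − z^{2ℓ+1} is a polynomial in z of degree at most ℓ+1. -/

import Mathlib

open Polynomial

/-- The generalized binomial coefficient `binom(−1/2, k)`. -/
noncomputable def gbinom (k : ℕ) : ℂ :=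
  (∏ j ∈ Finset.range k, ((-1/2 : ℂ) - j)) / (Nat.factorial k)

/-- `α^ℓ q̄(z/α) = Σ_{k=0}^{ℓ} binom(−1/2,k)(−2)^k α^k z^{ℓ−k}` as a polynomial in `z`
(outer variable) with coefficients polynomials in `α` (inner variable). -/
noncomputable def qbarScaled (ℓ : ℕ) : Polynomial (Polynomial ℂ) :=
  ∑ k ∈ Finset.range (ℓ + 1),
    C (Polynomial.C (gbinom k * (-2 : ℂ) ^ k) * Polynomial.X ^ k) * X ^ (ℓ - k)

/-- `B_α(z) = (z − 2α) (α^ℓ q̄(z/α))²` as a polynomial in `z` over `ℂ[α]`. -/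
noncomputable def Bpoly (ℓ : ℕ) : Polynomial (Polynomial ℂ) :=
  (X - C (Polynomial.C 2 * Polynomial.X)) * (qbarScaled ℓ) ^ 2

/-! `(1 - 2αz)^{-1/2} = Σ_k binom(−1/2,k) (−2α)^k z^k`, so its truncation `q = qTrunc ℓ` at
degree `ℓ` satisfies `(1 - 2αz) q(z)² ≡ 1 mod z^{ℓ+1}`. The polynomial `qbarScaled ℓ` is the
reversal `z^ℓ q(1/z)`, so reversing at degree `2ℓ+1` turns this congruence into
`deg (B_α(z) − z^{2ℓ+1}) ≤ ℓ`. -/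

namespace Polynomial

variable {R : Type*}

theorem reflect_sum [Semiring R] {ι : Type*} (s : Finset ι) (f : ι → R[X]) (N : ℕ) :
    reflect N (∑ i ∈ s, f i) = ∑ i ∈ s, reflect N (f i) :=
  map_sum ({ toFun := reflect N, map_zero' := reflect_zero, map_add' := (reflect_add · · N) } :
    R[X] →+ R[X]) f s

theorem natDegree_reflect_le_of_X_pow_dvd [Semiring R] {p : R[X]} {k M : ℕ} (hdvd : X ^ k ∣ p)
    (hp : p.natDegree ≤ k + M) : (reflect (k + M) p).natDegree ≤ M := by
  refine natDegree_le_iff_coeff_eq_zero.mpr fun i hi => ?_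
  rw [coeff_reflect]
  by_cases hi' : i ≤ k + M
  · rw [revAt_le hi']
    exact X_pow_dvd_iff.mp hdvd _ (by omega)
  · rw [revAt_eq_self_of_lt (by omega)]
    exact coeff_eq_zero_of_natDegree_lt (by omega)

theorem X_pow_dvd_mul_trunc_pow_sub_one [CommRing R] {g : R[X]} {f : PowerSeries R} {k : ℕ}
    (h : (g : PowerSeries R) * f ^ k = 1) (n : ℕ) :
    X ^ n ∣ g * PowerSeries.trunc n f ^ k - 1 := by
  have htrunc :
      PowerSeries.trunc n ((g * PowerSeries.trunc n f ^ k - 1 : R[X]) : PowerSeries R) = 0 := by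
    rw [coe_sub, coe_mul, coe_pow, coe_one, map_sub, ← PowerSeries.trunc_mul_trunc,
      PowerSeries.trunc_trunc_pow, PowerSeries.trunc_mul_trunc, h, sub_self]
  refine X_pow_dvd_iff.mpr fun d hd => ?_
  have hcoeff := congr(coeff $htrunc d)
  rwa [PowerSeries.coeff_trunc, if_pos hd, coeff_coe, coeff_zero] at hcoeff

end Polynomial

namespace PowerSeries

theorem binomialSeries_neg_one_mul_one_add_X {R A : Type*} [CommRing R] [BinomialRing R] [Ring A]
    [Algebra R A] : binomialSeries A (-1 : R) * (1 + X) = 1 := by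
  rw [← pow_one (1 + X), ← binomialSeries_nat (R := R), ← binomialSeries_add, Nat.cast_one,
    neg_add_cancel, binomialSeries_zero]

theorem binomialSeries_neg_half_sq {K A : Type*} [Field K] [CharZero K] [Ring A] [Algebra K A] :
    binomialSeries A (-1/2 : K) ^ 2 = binomialSeries A (-1 : K) := by
  rw [sq, ← binomialSeries_add]
  norm_num

end PowerSeries

theorem gbinom_eq_choose (k : ℕ) : gbinom k = Ring.choose (-1/2 : ℂ) k := by
  rw [Ring.choose_eq_smul, ← aeval_eq_smeval, aeval_def, ← eval_map, descPochhammer_map,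
    descPochhammer_eval_eq_prod_range, gbinom, smul_eq_mul, div_eq_inv_mul]

section invSqrtOneSubTwoMulX

open PowerSeries

variable {A : Type*} [CommRing A] [Algebra ℂ A]

noncomputable def invSqrtOneSubTwoMulX (a : A) : PowerSeries A :=
  rescale (-2 * a) (binomialSeries A (-1/2 : ℂ))

theorem coeff_invSqrtOneSubTwoMulX (a : A) (k : ℕ) :
    PowerSeries.coeff k (invSqrtOneSubTwoMulX a) =
      algebraMap ℂ A (gbinom k * (-2) ^ k) * a ^ k := by
  rw [invSqrtOneSubTwoMulX, coeff_rescale, binomialSeries_coeff, gbinom_eq_choose,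
    Algebra.smul_def, mul_one, map_mul, map_pow, map_neg, map_ofNat, mul_pow]
  ring

theorem one_sub_mul_invSqrtOneSubTwoMulX_sq (a : A) :
    (1 - PowerSeries.C (2 * a) * PowerSeries.X) * invSqrtOneSubTwoMulX a ^ 2 = 1 := by
  have h : 1 - PowerSeries.C (2 * a) * PowerSeries.X = rescale (-2 * a) (1 + PowerSeries.X) := by
    simp [rescale_X, sub_eq_add_neg]
  rw [h, invSqrtOneSubTwoMulX, ← map_pow, ← map_mul, binomialSeries_neg_half_sq,
    mul_comm (1 + PowerSeries.X), binomialSeries_neg_one_mul_one_add_X, map_one]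

end invSqrtOneSubTwoMulX

noncomputable def qTrunc (ℓ : ℕ) : ℂ[X][X] :=
  PowerSeries.trunc (ℓ + 1) (invSqrtOneSubTwoMulX (X : ℂ[X]))

theorem natDegree_qTrunc_le (ℓ : ℕ) : (qTrunc ℓ).natDegree ≤ ℓ :=
  Nat.lt_succ_iff.mp (PowerSeries.natDegree_trunc_lt _ _)

theorem X_pow_dvd_one_sub_mul_qTrunc_sq_sub_one (ℓ : ℕ) :
    X ^ (ℓ + 1) ∣ (1 - C (2 * X) * X) * qTrunc ℓ ^ 2 - 1 := by
  refine X_pow_dvd_mul_trunc_pow_sub_one ?_ _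
  rw [coe_sub, coe_one, coe_mul, coe_C, coe_X]
  exact one_sub_mul_invSqrtOneSubTwoMulX_sq X

theorem qbarScaled_eq_reflect_qTrunc (ℓ : ℕ) : qbarScaled ℓ = reflect ℓ (qTrunc ℓ) := by
  rw [qTrunc, PowerSeries.trunc_apply, ← Finset.range_eq_Ico, reflect_sum, qbarScaled]
  refine Finset.sum_congr rfl fun k hk => ?_
  rw [← C_mul_X_pow_eq_monomial, reflect_C_mul_X_pow, revAt_le (Finset.mem_range_succ_iff.mp hk),
    coeff_invSqrtOneSubTwoMulX, algebraMap_eq]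

theorem Bpoly_sub_X_pow_eq_reflect (ℓ : ℕ) :
    Bpoly ℓ - X ^ (2 * ℓ + 1) =
      reflect ((ℓ + 1) + ℓ) ((1 - C (2 * X) * X) * qTrunc ℓ ^ 2 - 1) := by
  have hlin : (1 - C (2 * X) * X : ℂ[X][X]).natDegree ≤ 1 := by compute_degree
  have hq := natDegree_qTrunc_le ℓ
  rw [reflect_sub, reflect_one, show (ℓ + 1) + ℓ = 1 + (ℓ + ℓ) by ring,
    reflect_mul _ _ hlin (natDegree_pow_le_of_le 2 hq |>.trans (by omega)), sq,
    reflect_mul _ _ hq hq, ← sq, ← qbarScaled_eq_reflect_qTrunc, reflect_sub, reflect_one,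
    reflect_C_mul, reflect_one_X, Bpoly, map_ofNat C 2]
  ring

theorem stmt6 (ℓ : ℕ) :
    (Bpoly ℓ - X ^ (2 * ℓ + 1)).degree ≤ ((ℓ + 1 : ℕ) : WithBot ℕ) := by
  have hdeg : ((1 - C (2 * X) * X) * qTrunc ℓ ^ 2 - 1).natDegree ≤ (ℓ + 1) + ℓ := by
    have hq := natDegree_qTrunc_le ℓ
    compute_degree
    omega
  refine degree_le_of_natDegree_le ?_
  rw [Bpoly_sub_X_pow_eq_reflect]
  exact (natDegree_reflect_le_of_X_pow_dvd (X_pow_dvd_one_sub_mul_qTrunc_sq_sub_one ℓ) hdeg).trans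
    ℓ.le_succ
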